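/- arXiv:1206.3209 — 8 statements merged into one kernel-verified Lean document; each statement's English description precedes it below -/
import Mathlib

section
/- Let f(X) = trace(Xᵀ Q X + 2 b aᵀ X) where X ∈ ℝ^{n×m}, Q ∈ S^n symmetric, a ∈ ℝ^n, and b ∈ ℝ^m with b ≠ 0. Then inf over all X ∈ ℝ^{n×m} of f(X) equals inf over ξ ∈ ℝ^n of f(ξ bᵀ). That is, the infimum of this quadratic matrix function is attained (in value) on rank-one matrices of the form ξ bᵀ. -/
open Matrix Finset

lemma Fdecomp {n m : ℕ} (Q : Matrix (Fin n) (Fin n) ℝ) (a : Fin n → ℝ) (b : Fin m → ℝ)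
    (X : Matrix (Fin n) (Fin m) ℝ) :
    Matrix.trace (X.transpose * Q * X) + 2 * Matrix.trace (Matrix.vecMulVec b a * X)
      = ∑ j, ((fun i => X i j) ⬝ᵥ Q.mulVec (fun i => X i j)
          + 2 * b j * (a ⬝ᵥ fun i => X i j)) := by
  simp only [Matrix.trace, Matrix.diag, Matrix.mul_apply, Matrix.vecMulVec_apply,
    Matrix.transpose_apply, dotProduct, Matrix.mulVec, Finset.mul_sum, Finset.sum_mul,
    Finset.sum_add_distrib]
  congr 1
  · apply Finset.sum_congr rfl
    intro j _
    rw [Finset.sum_comm]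
    apply Finset.sum_congr rfl
    intro i _
    apply Finset.sum_congr rfl
    intro k _
    ring
  · apply Finset.sum_congr rfl
    intro j _
    apply Finset.sum_congr rfl
    intro i _
    ring

theorem quad_matrix_inf_rank_one
    {n m : ℕ} (Q : Matrix (Fin n) (Fin n) ℝ) (hQ : Q.IsSymm)
    (a : Fin n → ℝ) (b : Fin m → ℝ) (hb : b ≠ 0) :
    (⨅ X : Matrix (Fin n) (Fin m) ℝ,
        ((Matrix.trace (X.transpose * Q * X) +
          2 * Matrix.trace (Matrix.vecMulVec b a * X) : ℝ) : EReal)) =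
    ⨅ ξ : Fin n → ℝ,
        ((Matrix.trace ((Matrix.vecMulVec ξ b).transpose * Q * Matrix.vecMulVec ξ b) +
          2 * Matrix.trace (Matrix.vecMulVec b a * Matrix.vecMulVec ξ b) : ℝ) : EReal) := by
  classical
  set q : (Fin n → ℝ) → ℝ := fun ξ => ξ ⬝ᵥ Q.mulVec ξ + 2 * (a ⬝ᵥ ξ) with hq
  set B : ℝ := b ⬝ᵥ b with hB
  have hB0 : 0 ≤ B := Finset.sum_nonneg fun i _ => mul_self_nonneg _
  have hBne : B ≠ 0 := fun h => hb (dotProduct_self_eq_zero.mp h)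
  have hBpos : 0 < B := lt_of_le_of_ne hB0 (Ne.symm hBne)
  have hrank : ∀ ξ : Fin n → ℝ,
      Matrix.trace ((Matrix.vecMulVec ξ b).transpose * Q * Matrix.vecMulVec ξ b) +
        2 * Matrix.trace (Matrix.vecMulVec b a * Matrix.vecMulVec ξ b) = B * q ξ := by
    intro ξ
    rw [Fdecomp]
    have step : ∀ j : Fin m,
        ((fun i => (Matrix.vecMulVec ξ b) i j) ⬝ᵥ Q.mulVec (fun i => (Matrix.vecMulVec ξ b) i j)
          + 2 * b j * (a ⬝ᵥ fun i => (Matrix.vecMulVec ξ b) i j)) = (b j * b j) * q ξ := by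
      intro j
      have hc : (fun i => (Matrix.vecMulVec ξ b) i j) = b j • ξ :=
        funext fun i => by simp [Matrix.vecMulVec_apply, mul_comm]
      rw [hc]
      simp only [smul_dotProduct, dotProduct_smul, Matrix.mulVec_smul, hq,
        smul_eq_mul]
      ring
    rw [Finset.sum_congr rfl (fun j _ => step j), ← Finset.sum_mul]
    rw [hB]
    rfl
  refine le_antisymm (le_iInf fun ξ => iInf_le _ (Matrix.vecMulVec ξ b)) (le_iInf fun X => ?_)
  by_contra hcon
  rw [not_le] at hcon
  obtain ⟨r, hr1, hr2⟩ := EReal.exists_between_coe_real hcon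
  have hlow : ∀ ξ : Fin n → ℝ, r / B ≤ q ξ := by
    intro ξ
    have h1 : (r : EReal) ≤ ((B * q ξ : ℝ) : EReal) := by
      refine le_trans hr2.le ?_
      refine le_trans (iInf_le _ ξ) ?_
      rw [hrank ξ]
    have h2 : r ≤ B * q ξ := EReal.coe_le_coe_iff.mp h1
    rw [div_le_iff₀ hBpos]
    linarith [h2, (mul_comm B (q ξ))]
  set c : ℝ := r / B with hc
  have hpsd : ∀ v : Fin n → ℝ, 0 ≤ v ⬝ᵥ Q.mulVec v := by
    intro v
    by_contra hneg
    push_neg at hneg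
    set d : ℝ := v ⬝ᵥ Q.mulVec v with hd
    set e : ℝ := a ⬝ᵥ v with he
    have hdneg : 0 < -d := by linarith
    set t : ℝ := max 1 ((2*|e| + |c| + 1) / (-d)) with ht
    have ht1 : 1 ≤ t := le_max_left _ _
    have ht0 : 0 < t := lt_of_lt_of_le one_pos ht1
    have htd : 2*|e| + |c| + 1 ≤ t * (-d) := by
      rw [← div_le_iff₀ hdneg]
      exact le_max_right _ _
    have hqt : q (t • v) = t * t * d + 2 * (t * e) := by
      simp only [hq, smul_dotProduct, dotProduct_smul, Matrix.mulVec_smul, smul_eq_mul, ← hd, ← he]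
      ring
    have hl := hlow (t • v)
    rw [hqt] at hl
    nlinarith [le_abs_self e, neg_abs_le e, neg_abs_le c, le_abs_self c,
      mul_le_mul_of_nonneg_left htd ht0.le]
  have hcol : ∀ (t : ℝ) (x : Fin n → ℝ),
      t * t * c ≤ x ⬝ᵥ Q.mulVec x + 2 * t * (a ⬝ᵥ x) := by
    intro t x
    by_cases htz : t = 0
    · simpa [htz] using hpsd x
    · have ht2 : 0 < t * t := mul_self_pos.mpr htz
      have hs : t * t * q (t⁻¹ • x) = x ⬝ᵥ Q.mulVec x + 2 * t * (a ⬝ᵥ x) := by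
        simp only [hq, smul_dotProduct, dotProduct_smul, Matrix.mulVec_smul, smul_eq_mul]
        field_simp
      calc t * t * c ≤ t * t * q (t⁻¹ • x) :=
            mul_le_mul_of_nonneg_left (hlow _) ht2.le
        _ = _ := hs
  have hFX : r ≤ Matrix.trace (X.transpose * Q * X) +
      2 * Matrix.trace (Matrix.vecMulVec b a * X) := by
    rw [Fdecomp]
    have : ∑ j : Fin m, (b j * b j) * c ≤
        ∑ j, ((fun i => X i j) ⬝ᵥ Q.mulVec (fun i => X i j)
          + 2 * b j * (a ⬝ᵥ fun i => X i j)) :=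
      Finset.sum_le_sum (fun j _ => hcol (b j) (fun i => X i j))
    refine le_trans ?_ this
    rw [← Finset.sum_mul]
    have hs : ∑ j : Fin m, b j * b j = B := rfl
    rw [hs, hc]
    rw [mul_div_cancel₀ r hBne]
  have : (r : EReal) ≤ ((Matrix.trace (X.transpose * Q * X) +
      2 * Matrix.trace (Matrix.vecMulVec b a * X) : ℝ) : EReal) := EReal.coe_le_coe_iff.mpr hFX
  exact absurd (lt_of_le_of_lt this hr1) (lt_irrefl _)
end

section
/- For N ≥ 1, let λ_i = i/(2N+1−i) for i = 1,…,N, and let S₀ be the (N+1)×(N+1) symmetric tridiagonal matrix with diagonal entries (2λ₁, 2λ₂, …, 2λ_N, 1) and off-diagonal entries S₀[i, i+1] = −λ_i for i = 1,…,N. Then S₀ is positive definite. -/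
/-- λ_i = i/(2N+1−i). -/
noncomputable def lamS (N i : ℕ) : ℝ := (i : ℝ) / (2 * N + 1 - i)

/-- The (N+1)×(N+1) symmetric tridiagonal matrix S₀ with diagonal
(2λ₁,…,2λ_N,1) and off-diagonal entries −λ₁,…,−λ_N. -/
noncomputable def S0mat (N : ℕ) : Matrix (Fin (N + 1)) (Fin (N + 1)) ℝ :=
  Matrix.of fun i j =>
    if i = j then (if (i : ℕ) = N then 1 else 2 * lamS N (i + 1))
    else if (i : ℕ) + 1 = (j : ℕ) then - lamS N (i + 1)
    else if (j : ℕ) + 1 = (i : ℕ) then - lamS N (j + 1)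
    else 0

/-!
`S0mat N` is symmetric and strictly diagonally dominant. For `i < N` the off-diagonal entries of
row `i` have absolute values summing to at most `λ_i + λ_{i+1} < 2 λ_{i+1}` (with `λ_0 = 0`),
because `λ` is strictly increasing, and the last row has off-diagonal mass `λ_N < 1`. By
Gershgorin's circle theorem every (real) eigenvalue lies within distance `r_k < (S₀)_{kk}` of some
diagonal entry `(S₀)_{kk}`, hence is positive.
-/

open Finset Matrix
open scoped ComplexOrder

theorem Matrix.IsHermitian.posDef_of_sum_row_lt_diag {𝕜 n : Type*} [RCLike 𝕜] [Fintype n]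
    [DecidableEq n] {A : Matrix n n 𝕜} (hA : A.IsHermitian)
    (h : ∀ k, ∑ j ∈ univ.erase k, ‖A k j‖ < RCLike.re (A k k)) : A.PosDef := by
  rw [hA.posDef_iff_eigenvalues_pos]
  intro i
  have hμ : Module.End.HasEigenvalue (toLin' A) (hA.eigenvalues i : 𝕜) := by
    rw [Module.End.hasEigenvalue_iff_mem_spectrum, spectrum_toLin']
    exact spectrum.algebraMap_mem 𝕜 (hA.eigenvalues_mem_spectrum_real i)
  obtain ⟨k, hk⟩ := eigenvalue_mem_ball hμ
  rw [Metric.mem_closedBall, dist_comm, dist_eq_norm] at hk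
  have hre := RCLike.re_le_norm (A k k - hA.eigenvalues i)
  simp only [map_sub, RCLike.ofReal_re] at hre
  linarith [h k]

lemma lamS_nonneg {N i : ℕ} (h : i ≤ 2 * N + 1) : 0 ≤ lamS N i := by
  have : (i : ℝ) ≤ 2 * N + 1 := by exact_mod_cast h
  exact div_nonneg (Nat.cast_nonneg i) (by linarith)

lemma lamS_lt_lamS_succ {N i : ℕ} (h : i < 2 * N) : lamS N i < lamS N (i + 1) := by
  have : (i : ℝ) + 1 ≤ 2 * N := by exact_mod_cast h
  rw [lamS, lamS, div_lt_div_iff₀ (by linarith) (by push_cast; linarith)]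
  push_cast
  nlinarith

lemma lamS_lt_one {N i : ℕ} (h : i ≤ N) : lamS N i < 1 := by
  have : (i : ℝ) ≤ N := by exact_mod_cast h
  rw [lamS, div_lt_one (by linarith)]
  linarith

theorem Fin.sum_univ_ite_succ_eq_val {M : Type*} [AddCommMonoid M] (n k : ℕ) (c : M) :
    ∑ j : Fin n, (if k + 1 = j then c else 0) = if k + 1 < n then c else 0 := by
  rw [Fin.sum_univ_eq_sum_range (fun j => if k + 1 = j then c else 0), sum_ite_eq]
  simp

theorem Fin.sum_univ_ite_val_succ_eq {M : Type*} [AddCommMonoid M] (n k : ℕ) (c : M) :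
    ∑ j : Fin n, (if (j : ℕ) + 1 = k then c else 0) = if 0 < k ∧ k ≤ n then c else 0 := by
  rw [Fin.sum_univ_eq_sum_range (fun j => if j + 1 = k then c else 0)]
  rcases k with _ | k
  · simp
  · simp only [Nat.add_right_cancel_iff, sum_ite_eq', mem_range, Nat.zero_lt_succ, true_and,
      Nat.add_one_le_iff]

lemma S0mat_isHermitian (N : ℕ) : (S0mat N).IsHermitian := by
  ext i j
  simp only [conjTranspose_apply, star_trivial, S0mat, of_apply, eq_comm (a := j)]
  split_ifs <;> subst_vars <;> first | rfl | omega

lemma abs_S0mat_apply_of_ne {N : ℕ} {k j : Fin (N + 1)} (h : j ≠ k) :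
    |S0mat N k j| = (if (k : ℕ) + 1 = j then lamS N (k + 1) else 0)
      + (if (j : ℕ) + 1 = k then lamS N k else 0) := by
  have hk := lamS_nonneg (N := N) (i := k + 1) (by omega)
  have hj := lamS_nonneg (N := N) (i := j + 1) (by omega)
  simp only [S0mat, of_apply, Ne.symm h, if_false]
  split_ifs <;> first | omega | simp_all [abs_of_nonneg]

lemma sum_erase_abs_S0mat_lt_diag (N : ℕ) (k : Fin (N + 1)) :
    ∑ j ∈ univ.erase k, |S0mat N k j| < S0mat N k k := by
  have hk := lamS_nonneg (N := N) (i := k) (by omega)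
  have hk' := lamS_nonneg (N := N) (i := k + 1) (by omega)
  calc ∑ j ∈ univ.erase k, |S0mat N k j|
      = ∑ j ∈ univ.erase k, ((if (k : ℕ) + 1 = j then lamS N (k + 1) else 0)
          + (if (j : ℕ) + 1 = k then lamS N k else 0)) :=
        sum_congr rfl fun j hj => abs_S0mat_apply_of_ne (ne_of_mem_erase hj)
    _ ≤ ∑ j : Fin (N + 1), ((if (k : ℕ) + 1 = j then lamS N (k + 1) else 0)
          + (if (j : ℕ) + 1 = k then lamS N k else 0)) :=
        sum_le_sum_of_subset_of_nonneg (erase_subset _ _) fun j _ _ => by positivity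
    _ ≤ (if (k : ℕ) < N then lamS N (k + 1) else 0) + lamS N k := by
        rw [sum_add_distrib, Fin.sum_univ_ite_succ_eq_val, Fin.sum_univ_ite_val_succ_eq]
        simp only [Nat.add_lt_add_iff_right]
        gcongr
        split_ifs <;> simp [hk]
    _ < S0mat N k k := by
        rcases (Nat.lt_succ_iff.mp k.isLt).lt_or_eq with hkN | hkN
        · simp only [S0mat, of_apply, if_true, hkN, hkN.ne, if_false]
          linarith [lamS_lt_lamS_succ (N := N) (i := k) (by omega)]
        · simp only [S0mat, of_apply, if_true, hkN, lt_irrefl, if_false, zero_add]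
          exact lamS_lt_one le_rfl

theorem S0_posDef_general (N : ℕ) : (S0mat N).PosDef :=
  (S0mat_isHermitian N).posDef_of_sum_row_lt_diag fun k => by
    simpa only [Real.norm_eq_abs, RCLike.re_to_real] using sum_erase_abs_S0mat_lt_diag N k

theorem S0_posDef (N : ℕ) (hN : 1 ≤ N) : (S0mat N).PosDef :=
  S0_posDef_general N
end

section
/- For N ≥ 1 and λ_i = i/(2N+1−i), the symmetric tridiagonal matrix S₀ (diagonal (2λ₁,…,2λ_N,1), off-diagonals −λ₁,…,−λ_N) satisfies, for every x = (x₀,…,x_N) ∈ ℝ^{N+1}: xᵀS₀x = Σ_{i=0}^{N−1} λ_{i+1}(x_{i+1}−x_i)² + λ₁x₀² + Σ_{i=1}^{N−1}(λ_{i+1}−λ_i)x_i² + (1−λ_N)x_N². -/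
open Matrix

/-- General tridiagonal quadratic form as a double ℕ-sum. -/
lemma tri_sum (d e x : ℕ → ℝ) (n : ℕ) :
    ∑ i ∈ Finset.range (n+1), ∑ j ∈ Finset.range (n+1),
      x i * ((if i = j then d i else if i + 1 = j then e i
              else if j + 1 = i then e j else 0) * x j)
    = ∑ i ∈ Finset.range (n+1), d i * x i ^ 2
      + 2 * ∑ i ∈ Finset.range n, e i * x i * x (i+1) := by
  induction n with
  | zero => simp; ring
  | succ n ih =>
    have h1 : ∀ i ∈ Finset.range (n+1),
        (∑ j ∈ Finset.range (n+1+1),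
          x i * ((if i = j then d i else if i + 1 = j then e i
                  else if j + 1 = i then e j else 0) * x j))
        = (∑ j ∈ Finset.range (n+1),
          x i * ((if i = j then d i else if i + 1 = j then e i
                  else if j + 1 = i then e j else 0) * x j))
          + x i * ((if i = n+1 then d i else if i + 1 = n+1 then e i
                  else if n+1+1 = i then e (n+1) else 0) * x (n+1)) := by
      intro i _
      rw [Finset.sum_range_succ]
    rw [Finset.sum_range_succ]
    rw [Finset.sum_congr rfl h1, Finset.sum_add_distrib, ih]
    have h2 : ∑ i ∈ Finset.range (n+1),
        x i * ((if i = n+1 then d i else if i + 1 = n+1 then e i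
                else if n+1+1 = i then e (n+1) else 0) * x (n+1))
        = e n * x n * x (n+1) := by
      rw [Finset.sum_eq_single_of_mem n (Finset.self_mem_range_succ n)]
      · rw [if_neg (by omega), if_pos rfl]; ring
      · intro b hb hbn
        simp only [Finset.mem_range] at hb
        rw [if_neg (by omega), if_neg (by omega), if_neg (by omega)]
        ring
    have h3 : ∑ j ∈ Finset.range (n+1+1),
        x (n+1) * ((if n+1 = j then d (n+1) else if n+1+1 = j then e (n+1)
                else if j + 1 = n+1 then e j else 0) * x j)
        = x (n+1) * (e n * x n) + x (n+1) * (d (n+1) * x (n+1)) := by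
      rw [Finset.sum_range_succ, if_pos rfl]
      congr 1
      rw [Finset.sum_eq_single_of_mem n (Finset.self_mem_range_succ n)]
      · rw [if_neg (by omega), if_neg (by omega), if_pos rfl]
      · intro b hb hbn
        simp only [Finset.mem_range] at hb
        rw [if_neg (by omega), if_neg (by omega), if_neg (by omega)]
        ring
    rw [h2, h3]
    simp only [Finset.sum_range_succ]
    ring

/-- The purely algebraic identity, for an arbitrary sequence l. -/
lemma quad_clean (l x : ℕ → ℝ) : ∀ n, 1 ≤ n →
    (∑ i ∈ Finset.range n, 2 * l (i+1) * x i ^ 2) + x n ^ 2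
      + 2 * ∑ i ∈ Finset.range n, (- l (i+1)) * x i * x (i+1)
    = (∑ i ∈ Finset.range n, l (i+1) * (x (i+1) - x i) ^ 2) + l 1 * x 0 ^ 2
      + (∑ i ∈ Finset.Ico 1 n, (l (i+1) - l i) * x i ^ 2) + (1 - l n) * x n ^ 2 := by
  intro n hn
  induction n, hn using Nat.le_induction with
  | base =>
    simp [Finset.sum_range_succ]
    ring
  | succ n hn ih =>
    have ih' := ih
    rw [Finset.sum_range_succ, Finset.sum_range_succ, Finset.sum_range_succ,
        Finset.sum_Ico_succ_top hn]
    linear_combination ih'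

/-- Collapse the diagonal sum with its special last entry. -/
lemma diag_sum (l x : ℕ → ℝ) (m : ℕ) :
    ∑ i ∈ Finset.range (m+1), (if i = m then (1:ℝ) else 2 * l (i+1)) * x i ^ 2
    = (∑ i ∈ Finset.range m, 2 * l (i+1) * x i ^ 2) + x m ^ 2 := by
  rw [Finset.sum_range_succ, if_pos rfl, one_mul]
  congr 1
  refine Finset.sum_congr rfl fun i hi => ?_
  simp only [Finset.mem_range] at hi
  rw [if_neg (by omega)]

theorem S0_quadratic_form (N : ℕ) (hN : 1 ≤ N) (x : ℕ → ℝ) :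
    (fun i : Fin (N + 1) => x i) ⬝ᵥ (S0mat N).mulVec (fun i : Fin (N + 1) => x i) =
      (∑ i ∈ Finset.range N, lamS N (i + 1) * (x (i + 1) - x i) ^ 2) +
      lamS N 1 * x 0 ^ 2 +
      (∑ i ∈ Finset.Ico 1 N, (lamS N (i + 1) - lamS N i) * x i ^ 2) +
      (1 - lamS N N) * x N ^ 2 := by
  set d : ℕ → ℝ := fun i => if i = N then 1 else 2 * lamS N (i+1) with hd
  set e : ℕ → ℝ := fun i => - lamS N (i+1) with he
  have hLHS : (fun i : Fin (N + 1) => x i) ⬝ᵥ (S0mat N).mulVec (fun i : Fin (N + 1) => x i)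
      = ∑ i ∈ Finset.range (N+1), ∑ j ∈ Finset.range (N+1),
          x i * ((if i = j then d i else if i + 1 = j then e i
                  else if j + 1 = i then e j else 0) * x j) := by
    rw [dotProduct]
    have hrow : ∀ i : Fin (N+1),
        (S0mat N).mulVec (fun j : Fin (N + 1) => x j) i
        = ∑ j ∈ Finset.range (N+1),
            ((if (i:ℕ) = j then d i else if (i:ℕ) + 1 = j then e i
              else if j + 1 = (i:ℕ) then e j else 0) * x j) := by
      intro i
      rw [mulVec, dotProduct,
        ← Fin.sum_univ_eq_sum_range (fun j =>
            ((if (i:ℕ) = j then d i else if (i:ℕ) + 1 = j then e i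
              else if j + 1 = (i:ℕ) then e j else 0) * x j)) (N+1)]
      refine Finset.sum_congr rfl fun j _ => ?_
      simp [S0mat, hd, he, Fin.ext_iff]
    calc ∑ i : Fin (N+1), x i * (S0mat N).mulVec (fun j : Fin (N + 1) => x j) i
        = ∑ i : Fin (N+1), (fun a : ℕ => x a * ∑ j ∈ Finset.range (N+1),
            ((if a = j then d a else if a + 1 = j then e a
              else if j + 1 = a then e j else 0) * x j)) (i : ℕ) := by
          refine Finset.sum_congr rfl fun i _ => ?_
          rw [hrow]
      _ = ∑ i ∈ Finset.range (N+1), (fun a : ℕ => x a * ∑ j ∈ Finset.range (N+1),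
            ((if a = j then d a else if a + 1 = j then e a
              else if j + 1 = a then e j else 0) * x j)) i :=
          by exact Fin.sum_univ_eq_sum_range (fun a : ℕ => x a * ∑ j ∈ Finset.range (N+1),
            ((if a = j then d a else if a + 1 = j then e a
              else if j + 1 = a then e j else 0) * x j)) (N+1)
      _ = _ := by
          refine Finset.sum_congr rfl fun i _ => ?_
          simp only []
          rw [Finset.mul_sum]
  rw [hLHS, tri_sum, diag_sum (lamS N) x N]
  · exact quad_clean (lamS N) x N hN
end

section
/- For N ≥ 1, let λ_i = i/(2N+1−i) and let S₁ be the (N+1)×(N+1) symmetric matrix with (S₁)_{jj} = 2λ_j for j = 1,…,N, (S₁)_{N+1,N+1} = 1, and for i < j ≤ N, (S₁)_{ij} = (S₁)_{ji} = λ_j − λ_{j−1} (with λ₀ := 0), and (S₁)_{i,N+1} = (S₁)_{N+1,i} = 1 − λ_N for i ≤ N. Then S₁ is positive definite. -/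
/-- The (N+1)×(N+1) symmetric matrix S₁: diagonal entries (2λ₁,…,2λ_N,1),
off-diagonal entry λ_j − λ_{j−1} for the (i,j) position with i < j ≤ N (1-based),
and 1 − λ_N in the last row/column. -/
noncomputable def S1mat (N : ℕ) : Matrix (Fin (N + 1)) (Fin (N + 1)) ℝ :=
  Matrix.of fun i j =>
    if (i : ℕ) = N ∧ (j : ℕ) = N then 1
    else if (i : ℕ) = N ∨ (j : ℕ) = N then 1 - lamS N N
    else if i = j then 2 * lamS N (i + 1)
    else lamS N (max (i : ℕ) (j : ℕ) + 1) - lamS N (max (i : ℕ) (j : ℕ))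

/-!
`S₁ = Lᴴ D L` with `L` unit lower triangular, row `m` of `L` being
`e_m + (2N + 1 - m)⁻¹ ∑_{i < m} e_i`, and `D` diagonal with positive pivots. For `i ≤ j < N`
the rows below `j` contribute to `(S₁)_{ij}` a telescoping sum equal to
`tail N (j + 1) = (2N - 1 - 2j)/(2N - j)²`, and the pivots are read off from the diagonal:
`pivot N j = 2λ_{j+1} - tail N (j + 1)` for `j < N`.
-/

open Matrix Finset

theorem Matrix.posDef_conjTranspose_mul_diagonal_mul {K n : Type*} [Field K] [PartialOrder K]
    [StarRing K] [StarOrderedRing K] [Fintype n] [DecidableEq n] [LinearOrder n]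
    {d : n → K} (hd : ∀ i, 0 < d i) {L : Matrix n n K} (hL : L.IsLowerTriangular)
    (hLd : ∀ i, L i i ≠ 0) : (Lᴴ * diagonal d * L).PosDef := by
  refine (PosDef.diagonal hd).conjTranspose_mul_mul_same ?_
  rw [mulVec_injective_iff_isUnit, isUnit_iff_isUnit_det, isUnit_iff_ne_zero,
    det_of_isLowerTriangular L hL]
  exact prod_ne_zero_iff.2 fun i _ => hLd i

namespace S1mat

noncomputable def pivot (N m : ℕ) : ℝ :=
  if m = N then 1 else (2 * m * (2 * N - m) + 2 * N + 1) / (2 * N - m) ^ 2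

noncomputable def factorEntry (N m i : ℕ) : ℝ :=
  if i = m then 1 else if i < m then 1 / (2 * N + 1 - m) else 0

noncomputable def tail (N m : ℕ) : ℝ := (2 * N + 1 - 2 * m) / (2 * N + 1 - m) ^ 2

variable {N : ℕ}

lemma pivot_pos {m : ℕ} (hm : m ≤ N) : 0 < pivot N m := by
  unfold pivot
  split_ifs with h
  · exact one_pos
  · have hmN : (m : ℝ) < N := by exact_mod_cast lt_of_le_of_ne hm h
    have : 0 < 2 * (N : ℝ) - m := by linarith
    positivity

lemma pivot_mul_sq_eq_tail_sub {m : ℕ} (hm : m < N) :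
    pivot N m * (1 / (2 * N + 1 - m)) ^ 2 = tail N m - tail N (m + 1) := by
  have hmN : (m : ℝ) < N := by exact_mod_cast hm
  have h1 : 2 * (N : ℝ) - m ≠ 0 := by linarith
  have h2 : 2 * (N : ℝ) + 1 - m ≠ 0 := by linarith
  rw [pivot, if_neg hm.ne, tail, tail, Nat.cast_add_one,
    show 2 * (N : ℝ) + 1 - (m + 1) = 2 * N - m by ring]
  field_simp
  ring

lemma pivot_mul_sq_self : pivot N N * (1 / (2 * N + 1 - N)) ^ 2 = tail N N := by
  have : (N : ℝ) + 1 ≠ 0 := by positivity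
  rw [pivot, if_pos rfl, tail, show 2 * (N : ℝ) + 1 - N = N + 1 by ring]
  field_simp
  ring

lemma sum_Ico_pivot_mul_sq {j : ℕ} (hj : j ≤ N) :
    ∑ m ∈ Ico j (N + 1), pivot N m * (1 / (2 * N + 1 - m)) ^ 2 = tail N j := by
  have htel : ∑ m ∈ Ico j N, pivot N m * (1 / (2 * N + 1 - m)) ^ 2 = tail N j - tail N N := by
    rw [sum_congr rfl fun m hm => pivot_mul_sq_eq_tail_sub (mem_Ico.1 hm).2, ← neg_sub,
      ← sum_Ico_sub (tail N) hj, ← sum_neg_distrib]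
    simp only [neg_sub]
  rw [sum_Ico_succ_top hj, htel, pivot_mul_sq_self, sub_add_cancel]

lemma sum_factorEntry_mul_pivot_mul {i j : ℕ} (hij : i ≤ j) (hjN : j ≤ N) :
    ∑ m ∈ range (N + 1), factorEntry N m i * pivot N m * factorEntry N m j
      = pivot N j * factorEntry N j i
        + ∑ m ∈ Ico (j + 1) (N + 1), pivot N m * (1 / (2 * N + 1 - m)) ^ 2 := by
  rw [← sum_range_add_sum_Ico _ (show j + 1 ≤ N + 1 by omega), sum_range_succ,
    sum_eq_zero fun m hm => ?_]
  · congr 1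
    · rw [show factorEntry N j j = 1 from if_pos rfl]
      ring
    · refine sum_congr rfl fun m hm => ?_
      have hm := mem_Ico.1 hm
      simp only [factorEntry, if_neg (show i ≠ m by omega), if_neg (show j ≠ m by omega),
        if_pos (show i < m by omega), if_pos (show j < m by omega)]
      ring
  · have hm := mem_range.1 hm
    have hjm : factorEntry N m j = 0 := by
      rw [factorEntry, if_neg (by omega), if_neg (by omega)]
    rw [hjm, mul_zero]

lemma apply_of_le {i j : Fin (N + 1)} (hij : i ≤ j) :
    S1mat N i j = ∑ m ∈ range (N + 1), factorEntry N m i * pivot N m * factorEntry N m j := by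
  replace hij : (i : ℕ) ≤ j := hij
  rw [sum_factorEntry_mul_pivot_mul hij j.is_le, S1mat, of_apply]
  rcases Nat.lt_or_eq_of_le j.is_le with hj | hj
  · have hjR : (j : ℝ) < N := by exact_mod_cast hj
    have h1 : 2 * (N : ℝ) - j ≠ 0 := by linarith
    have h2 : 2 * (N : ℝ) + 1 - j ≠ 0 := by linarith
    rw [if_neg (by omega), if_neg (by omega), sum_Ico_pivot_mul_sq hj, pivot, if_neg hj.ne, tail]
    rcases Nat.lt_or_eq_of_le hij with hlt | heq
    · rw [if_neg (Fin.ne_of_val_ne hlt.ne), factorEntry, if_neg hlt.ne, if_pos hlt,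
        max_eq_right hlt.le, lamS, lamS]
      push_cast
      rw [show 2 * (N : ℝ) + 1 - (j + 1) = 2 * N - j by ring]
      field_simp
      ring
    · rw [if_pos (Fin.ext heq), factorEntry, if_pos heq, heq, lamS]
      push_cast
      rw [show 2 * (N : ℝ) + 1 - (j + 1) = 2 * N - j by ring]
      field_simp
      ring
  · rw [hj, Ico_self, sum_empty, pivot, if_pos rfl]
    rcases Nat.lt_or_eq_of_le hij with hlt | heq
    · rw [if_neg (by omega), if_pos (Or.inr rfl), factorEntry, if_neg (by omega), if_pos (by omega),
        lamS, show 2 * (N : ℝ) + 1 - N = N + 1 by ring]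
      have : (N : ℝ) + 1 ≠ 0 := by positivity
      field_simp
      ring
    · rw [if_pos ⟨by omega, rfl⟩, factorEntry, if_pos (by omega), add_zero, mul_one]

lemma apply_comm (i j : Fin (N + 1)) : S1mat N i j = S1mat N j i := by
  rcases eq_or_ne i j with rfl | hne
  · rfl
  · simp only [S1mat, of_apply, and_comm, or_comm, if_neg hne, if_neg hne.symm, max_comm]

variable (N) in
noncomputable def factor : Matrix (Fin (N + 1)) (Fin (N + 1)) ℝ :=
  of fun m i => factorEntry N m i

lemma factor_isLowerTriangular : (factor N).IsLowerTriangular := fun m i him => by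
  have him : (m : ℕ) < i := him
  rw [factor, of_apply, factorEntry, if_neg him.ne', if_neg him.asymm]

lemma factor_apply_self (i : Fin (N + 1)) : factor N i i = 1 := if_pos rfl

lemma eq_conjTranspose_mul_diagonal_mul :
    S1mat N = (factor N)ᴴ * diagonal (fun m : Fin (N + 1) => pivot N m) * factor N := by
  have hmul (i j : Fin (N + 1)) :
      ((factor N)ᴴ * diagonal (fun m : Fin (N + 1) => pivot N m) * factor N) i j
        = ∑ m ∈ range (N + 1), factorEntry N m i * pivot N m * factorEntry N m j := by
    simp only [mul_apply (M := _ * _), mul_diagonal, conjTranspose_apply, star_trivial, factor,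
      of_apply]
    exact Fin.sum_univ_eq_sum_range (fun m => factorEntry N m i * pivot N m * factorEntry N m j) _
  ext i j
  rw [hmul]
  rcases le_total i j with hij | hji
  · exact apply_of_le hij
  · rw [apply_comm, apply_of_le hji]
    exact sum_congr rfl fun m _ => by ring

end S1mat

theorem S1_posDef_general (N : ℕ) : (S1mat N).PosDef := by
  rw [S1mat.eq_conjTranspose_mul_diagonal_mul]
  exact posDef_conjTranspose_mul_diagonal_mul (fun m => S1mat.pivot_pos (Nat.lt_succ_iff.1 m.2))
    S1mat.factor_isLowerTriangular fun i => (S1mat.factor_apply_self i).symm ▸ one_ne_zero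

theorem S1_posDef (N : ℕ) (hN : 1 ≤ N) : (S1mat N).PosDef :=
  S1_posDef_general N
end

section
/- Let M_k (k ≥ 2) be the (k+1)×(k+1) symmetric matrix with diagonal (d₀,…,d_k) and entries (M_k)_{ij} = a_{max(i,j)} for i ≠ j (indices 0..k), where a₁,…,a_k are nonzero reals and d₀,…,d_k are reals. Then det M_k = (d_k − 2a_k²/a_{k−1} + a_k² d_{k−1}/a_{k−1}²)·det M_{k−1} − a_k²(1 − d_{k−1}/a_{k−1})²·det M_{k−2}, where M_{k−1}, M_{k−2} are the corresponding leading principal submatrices. -/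
/-!
Since `a k = c * a (k - 1)` with `c = a k / a (k - 1)`, subtracting `c` times row and column
`k - 1` from row and column `k` (a congruence by a transvection, so the determinant is unchanged)
turns every entry of the last row and column into `0`, except `a k - c * d (k - 1)` in position
`k - 1` and `d k - 2 * c * a k + c ^ 2 * d (k - 1)` on the diagonal, while `M_{k-1}` stays in the
top-left corner. Expanding along the last row and then along the last column gives the recursion.
-/

open Matrix

/-- The (k+1)×(k+1) matrix with diagonal (d₀,…,d_k) and (i,j)-entry a_{max(i,j)}
for i ≠ j. -/
noncomputable def Mmat (d a : ℕ → ℝ) (k : ℕ) : Matrix (Fin (k + 1)) (Fin (k + 1)) ℝ :=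
  Matrix.of fun i j => if i = j then d i else a (max (i : ℕ) (j : ℕ))

namespace Matrix

variable {R : Type*} [CommRing R] {n : ℕ}

theorem det_eq_mul_det_of_lastCol {B : Matrix (Fin (n + 1)) (Fin (n + 1)) R}
    (h : ∀ i : Fin n, B i.castSucc (Fin.last n) = 0) :
    B.det = B (Fin.last n) (Fin.last n) * (B.submatrix Fin.castSucc Fin.castSucc).det := by
  rw [det_succ_column B (Fin.last n), Fin.sum_univ_castSucc]
  simp [h]

theorem det_eq_of_lastRow_lastCol {A : Matrix (Fin (n + 2)) (Fin (n + 2)) R}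
    (hrow : ∀ j : Fin n, A (Fin.last _) j.castSucc.castSucc = 0)
    (hcol : ∀ i : Fin n, A i.castSucc.castSucc (Fin.last _) = 0) :
    A.det = A (Fin.last _) (Fin.last _) * (A.submatrix Fin.castSucc Fin.castSucc).det -
      A (Fin.last _) (Fin.last n).castSucc * A (Fin.last n).castSucc (Fin.last _) *
        ((A.submatrix Fin.castSucc Fin.castSucc).submatrix Fin.castSucc Fin.castSucc).det := by
  rw [det_succ_row A (Fin.last _), Fin.sum_univ_castSucc, Fin.sum_univ_castSucc]
  have hminor : (A.submatrix Fin.castSucc (Fin.last n).castSucc.succAbove).det =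
      A (Fin.last n).castSucc (Fin.last _) *
        ((A.submatrix Fin.castSucc Fin.castSucc).submatrix Fin.castSucc Fin.castSucc).det := by
    rw [det_eq_mul_det_of_lastCol (fun i => by simpa using hcol i)]
    congr 2
    · simp
    · ext i j
      simp [Fin.succAbove_of_castSucc_lt _ _ (Fin.castSucc_lt_castSucc_iff.2 j.castSucc_lt_last)]
  simp only [Fin.val_last, Fin.val_castSucc, hrow, mul_zero, Fin.succAbove_last, zero_mul,
    Finset.sum_const_zero, odd_add_one_self, Odd.neg_one_pow, neg_mul, one_mul, hminor,
    submatrix_submatrix, zero_add, Even.add_self, Even.neg_pow, one_pow]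
  ring

end Matrix

section Mmat

variable (d a : ℕ → ℝ) {k : ℕ}

theorem Mmat_apply_self (i : Fin (k + 1)) : Mmat d a k i i = d i := by
  simp [Mmat]

theorem Mmat_apply_of_lt {i j : Fin (k + 1)} (h : i < j) : Mmat d a k i j = a j := by
  simp [Mmat, h.ne, max_eq_right (Fin.val_fin_le.2 h.le)]

theorem Mmat_apply_of_gt {i j : Fin (k + 1)} (h : j < i) : Mmat d a k i j = a i := by
  simp [Mmat, h.ne', max_eq_left (Fin.val_fin_le.2 h.le)]

theorem Mmat_submatrix_castSucc :
    (Mmat d a (k + 1)).submatrix Fin.castSucc Fin.castSucc = Mmat d a k := by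
  ext i j
  simp [Mmat]

theorem det_Mmat_add_two (m : ℕ) {c : ℝ} (hc : a (m + 2) = c * a (m + 1)) :
    (Mmat d a (m + 2)).det =
      (d (m + 2) - 2 * c * a (m + 2) + c ^ 2 * d (m + 1)) * (Mmat d a (m + 1)).det -
        (a (m + 2) - c * d (m + 1)) ^ 2 * (Mmat d a m).det := by
  set i₀ : Fin (m + 3) := Fin.last (m + 2)
  set j₀ : Fin (m + 3) := (Fin.last (m + 1)).castSucc
  have hne : i₀ ≠ j₀ := (Fin.castSucc_lt_last _).ne'
  set A := transvection i₀ j₀ (-c) * Mmat d a (m + 2) * transvection j₀ i₀ (-c)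
  have hdet : A.det = (Mmat d a (m + 2)).det := by
    simp [A, hne, hne.symm]
  have hsub : A.submatrix Fin.castSucc Fin.castSucc = Mmat d a (m + 1) := by
    rw [← Mmat_submatrix_castSucc]
    ext i j
    simp [A, i₀, (Fin.castSucc_lt_last _).ne]
  have hrow : ∀ j : Fin (m + 1), A i₀ j.castSucc.castSucc = 0 := by
    intro j
    simp [A, i₀, j₀, Mmat_apply_of_gt, hc]
  have hcol : ∀ i : Fin (m + 1), A i.castSucc.castSucc i₀ = 0 := by
    intro i
    simp [A, i₀, j₀, Mmat_apply_of_lt, hc]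
  have hoff₁ : A i₀ j₀ = a (m + 2) - c * d (m + 1) := by
    simp [A, i₀, j₀, Mmat_apply_of_gt, Mmat_apply_self, sub_eq_add_neg]
  have hoff₂ : A j₀ i₀ = a (m + 2) - c * d (m + 1) := by
    simp [A, i₀, j₀, Mmat_apply_of_lt, Mmat_apply_self, sub_eq_add_neg]
  have hdiag : A i₀ i₀ = d (m + 2) - c * a (m + 2) - c * (a (m + 2) - c * d (m + 1)) := by
    simp [A, i₀, j₀, Mmat_apply_of_lt, Mmat_apply_of_gt, Mmat_apply_self, sub_eq_add_neg]
  rw [← hdet, det_eq_of_lastRow_lastCol hrow hcol, hsub, Mmat_submatrix_castSucc, hoff₁, hoff₂,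
    hdiag]
  ring

end Mmat

theorem det_M_recursion (d a : ℕ → ℝ) (k : ℕ) (hk : 2 ≤ k)
    (ha : ∀ i : ℕ, 1 ≤ i → i ≤ k → a i ≠ 0) :
    (Mmat d a k).det =
      (d k - 2 * (a k) ^ 2 / a (k - 1) + (a k) ^ 2 * d (k - 1) / (a (k - 1)) ^ 2) *
        (Mmat d a (k - 1)).det -
      (a k) ^ 2 * (1 - d (k - 1) / a (k - 1)) ^ 2 * (Mmat d a (k - 2)).det := by
  obtain ⟨m, rfl⟩ : ∃ m, k = m + 2 := ⟨k - 2, by omega⟩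
  have ha₁ : a (m + 1) ≠ 0 := ha (m + 1) (by omega) (by omega)
  rw [show m + 2 - 1 = m + 1 by omega, show m + 2 - 2 = m by omega,
    det_Mmat_add_two d a m (c := a (m + 2) / a (m + 1)) (div_mul_cancel₀ _ ha₁).symm]
  field_simp
end

section
/- Let f ∈ C^{1,1}_L(ℝ^d) be convex with minimizer x⋆ and let x₀,…,x_N be generated by the gradient method x_{i+1} = x_i − (h/L)∇f(x_i) with 0 < h ≤ 1. Then f(x_N) − f(x⋆) ≤ L‖x₀ − x⋆‖²/(4Nh + 2). -/
/-!
After replacing `f` by `f / L` we may take `L = 1`. Write `δᵢ = f xᵢ - f x⋆` and `gᵢ = ∇f xᵢ`.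
Convexity together with the descent lemma gives the interpolation inequality
`f a + ⟪∇f a, b - a⟫ + ‖∇f b - ∇f a‖² / 2 ≤ f b`, used for consecutive iterates and for the
pairs `(xᵢ, x⋆)`. The first kind is weighted by `Λᵢ = (2Nh+1) i / (2N+1-i)` and the second by
`tᵢ = Λᵢ₊₁ - Λᵢ`, where `Λ_{N+1} = 2Nh+1`. Partial sums of this combination give a potential
`Φₙ` with `Φ₀ = ‖x₀ - x⋆‖² / 2`. Each step removes a nonnegative combination of the
`‖gₙ - gⱼ‖²` (this is where `h ≤ tⱼ` and `h ≤ 1` enter), so `Φₙ` never increases. The last step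
leaves `(2Nh+1) δ_N`.
-/

open RealInnerProductSpace

section SmoothConvex

open Set

variable {E : Type*} [NormedAddCommGroup E] [InnerProductSpace ℝ E] [CompleteSpace E]
  {f : E → ℝ}

theorem hasDerivAt_comp_add_smul (hf : Differentiable ℝ f) (a v : E) (t : ℝ) :
    HasDerivAt (fun s : ℝ => f (a + s • v)) ⟪gradient f (a + t • v), v⟫ t := by
  have hline : HasDerivAt (fun s : ℝ => a + s • v) v t := by
    simpa using ((hasDerivAt_id t).smul_const v).const_add a
  simpa [Function.comp_def] using
    (hf (a + t • v)).hasGradientAt.hasFDerivAt.comp_hasDerivAt t hline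

theorem ConvexOn.add_inner_gradient_le (hconv : ConvexOn ℝ univ f) (hf : Differentiable ℝ f)
    (a b : E) : f a + ⟪gradient f a, b - a⟫ ≤ f b := by
  have hline : ConvexOn ℝ univ (fun t : ℝ => f (a + t • (b - a))) := by
    simpa [Function.comp_def, AffineMap.lineMap_apply, add_comm] using
      hconv.comp_affineMap (AffineMap.lineMap a b (k := ℝ))
  have := hline.le_slope_of_hasDerivAt (mem_univ 0) (mem_univ 1) one_pos
    (by simpa only [zero_smul, add_zero] using hasDerivAt_comp_add_smul hf a (b - a) 0)
  simp only [slope, vsub_eq_sub, sub_zero, inv_one, smul_eq_mul, one_mul, one_smul, zero_smul,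
    add_zero, add_sub_cancel] at this
  linarith

theorem le_add_inner_gradient_add_sq {L : ℝ} (hf : Differentiable ℝ f)
    (hlip : ∀ x y, ‖gradient f x - gradient f y‖ ≤ L * ‖x - y‖) (a b : E) :
    f b ≤ f a + ⟪gradient f a, b - a⟫ + L / 2 * ‖b - a‖ ^ 2 := by
  set v := b - a
  let φ : ℝ → ℝ := fun t => f (a + t • v) - t * ⟪gradient f a, v⟫ - L / 2 * ‖v‖ ^ 2 * t ^ 2
  have hφ : ∀ t, HasDerivAt φ (⟪gradient f (a + t • v) - gradient f a, v⟫ - L * ‖v‖ ^ 2 * t) t :=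
    fun t => (((hasDerivAt_comp_add_smul hf a v t).sub ((hasDerivAt_id t).mul_const
      ⟪gradient f a, v⟫)).sub ((hasDerivAt_pow 2 t).const_mul (L / 2 * ‖v‖ ^ 2))).congr_deriv
      (by rw [inner_sub_left]; push_cast; ring)
  have hφ' : ∀ t ∈ interior (Ici (0 : ℝ)),
      ⟪gradient f (a + t • v) - gradient f a, v⟫ - L * ‖v‖ ^ 2 * t ≤ 0 := by
    intro t ht
    rw [interior_Ici, mem_Ioi] at ht
    have hgrad : ‖gradient f (a + t • v) - gradient f a‖ ≤ L * (t * ‖v‖) := by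
      simpa [norm_smul, abs_of_pos ht] using hlip (a + t • v) a
    nlinarith [real_inner_le_norm (gradient f (a + t • v) - gradient f a) v, norm_nonneg v]
  have hanti : AntitoneOn φ (Ici 0) :=
    antitoneOn_of_hasDerivWithinAt_nonpos (convex_Ici 0)
      (fun t _ => (hφ t).continuousAt.continuousWithinAt)
      (fun t _ => (hφ t).hasDerivWithinAt) hφ'
  have := hanti self_mem_Ici (mem_Ici.2 zero_le_one) zero_le_one
  simp only [φ, v, zero_smul, one_smul, add_zero, add_sub_cancel, zero_mul, one_mul, one_pow,
    mul_one, sub_zero, ne_eq, OfNat.ofNat_ne_zero, not_false_eq_true, zero_pow] at this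
  linarith

theorem ConvexOn.add_inner_gradient_add_sq_le {L : ℝ} (hL : 0 < L) (hconv : ConvexOn ℝ univ f)
    (hf : Differentiable ℝ f) (hlip : ∀ x y, ‖gradient f x - gradient f y‖ ≤ L * ‖x - y‖)
    (a b : E) :
    f a + ⟪gradient f a, b - a⟫ + ‖gradient f b - gradient f a‖ ^ 2 / (2 * L) ≤ f b := by
  set d := gradient f b - gradient f a
  set w := b - L⁻¹ • d
  have hlower := hconv.add_inner_gradient_le hf a w
  have hupper := le_add_inner_gradient_add_sq hf hlip b w
  have hwb : w - b = -(L⁻¹ • d) := by simp [w]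
  have hwa : w - a = (b - a) - L⁻¹ • d := by simp only [w]; abel
  rw [hwa, inner_sub_right, real_inner_smul_right] at hlower
  rw [hwb, inner_neg_right, real_inner_smul_right, norm_neg, norm_smul, Real.norm_eq_abs,
    abs_inv, abs_of_pos hL] at hupper
  have hd : L⁻¹ * ⟪gradient f b, d⟫ - L⁻¹ * ⟪gradient f a, d⟫ = L⁻¹ * ‖d‖ ^ 2 := by
    rw [← mul_sub, ← inner_sub_left, real_inner_self_eq_norm_sq]
  have hcoef : L⁻¹ * ‖d‖ ^ 2 - L / 2 * (L⁻¹ * ‖d‖) ^ 2 = ‖d‖ ^ 2 / (2 * L) := by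
    field_simp
    ring
  linarith

end SmoothConvex

section

open Finset

variable {E : Type*} [NormedAddCommGroup E] [InnerProductSpace ℝ E]

theorem sum_mul_norm_sub_sq {ι : Type*} (s : Finset ι) (c : ι → ℝ) (x : E) (v : ι → E) :
    ∑ i ∈ s, c i * ‖x - v i‖ ^ 2
      = (∑ i ∈ s, c i) * ‖x‖ ^ 2 - 2 * ⟪x, ∑ i ∈ s, c i • v i⟫ + ∑ i ∈ s, c i * ‖v i‖ ^ 2 := by
  rw [inner_sum, sum_mul, mul_sum, ← sum_sub_distrib, ← sum_add_distrib]
  refine sum_congr rfl fun i _ => ?_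
  rw [norm_sub_sq_real, real_inner_smul_right]
  ring

theorem eq_sub_smul_sum_range_of_succ {x v : ℕ → E} {c : ℝ} {N : ℕ}
    (hrec : ∀ i < N, x (i + 1) = x i - c • v i) :
    ∀ i ≤ N, x i = x 0 - c • ∑ j ∈ range i, v j
  | 0, _ => by simp
  | i + 1, hi => by
    rw [hrec i hi, eq_sub_smul_sum_range_of_succ hrec i (Nat.le_of_succ_le hi), sum_range_succ,
      smul_add, sub_sub]

theorem gradient_const_mul [CompleteSpace E] {f : E → ℝ} (c : ℝ) (hf : Differentiable ℝ f)
    (x : E) : gradient (fun y => c * f y) x = c • gradient f x := by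
  refine HasGradientAt.gradient ?_
  rw [hasGradientAt_iff_hasFDerivAt, map_smul]
  exact (hf x).hasGradientAt.hasFDerivAt.const_mul c

end

namespace GradientMethod

open Finset

variable (h : ℝ) (N : ℕ)

noncomputable def weightSum (k : ℕ) : ℝ :=
  if k ≤ N then (2 * N * h + 1) * k / (2 * N + 1 - k) else 2 * N * h + 1

noncomputable def weight (i : ℕ) : ℝ := weightSum h N (i + 1) - weightSum h N i

variable {h N}

@[simp] theorem weightSum_zero : weightSum h N 0 = 0 := by simp [weightSum]

theorem weightSum_succ (n : ℕ) : weightSum h N (n + 1) = weightSum h N n + weight h N n := by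
  rw [weight]; ring

theorem sum_range_weight (n : ℕ) : ∑ j ∈ range n, weight h N j = weightSum h N n := by
  simp only [weight]
  rw [sum_range_sub, weightSum_zero, sub_zero]

theorem weightSum_of_le {k : ℕ} (hk : k ≤ N) :
    weightSum h N k = (2 * N * h + 1) * k / (2 * N + 1 - k) := if_pos hk

theorem weightSum_succ_self : weightSum h N (N + 1) = 2 * N * h + 1 := by simp [weightSum]

theorem weightSum_nonneg (hh : 0 ≤ h) (k : ℕ) : 0 ≤ weightSum h N k := by
  unfold weightSum
  split_ifs with hk
  · have : (k : ℝ) ≤ N := by exact_mod_cast hk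
    apply div_nonneg <;> [positivity; linarith]
  · positivity

theorem weight_mul_of_lt {n : ℕ} (hn : n < N) :
    weight h N n * (2 * N - n) = 2 * N * h + 1 + weightSum h N n := by
  have hn' : (n : ℝ) + 1 ≤ N := by exact_mod_cast hn
  rw [weight, weightSum_of_le hn, weightSum_of_le hn.le]
  have h1 : (2 * N + 1 - (n + 1 : ℕ) : ℝ) = 2 * N - n := by push_cast; ring
  have h2 : (2 * N - n : ℝ) ≠ 0 := by linarith
  have h3 : (2 * N + 1 - n : ℝ) ≠ 0 := by linarith
  rw [h1]
  field_simp
  push_cast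
  ring

theorem weight_self_mul : weight h N N * N = weightSum h N N := by
  have : (N : ℝ) + 1 ≠ 0 := by positivity
  rw [weight, weightSum_succ_self, weightSum_of_le le_rfl,
    show (2 * N + 1 - N : ℝ) = N + 1 by ring]
  field_simp
  ring

theorem le_weight (hh0 : 0 < h) (hh1 : h ≤ 1) {i : ℕ} (hi : i ≤ N) : h ≤ weight h N i := by
  rcases hi.lt_or_eq with hi | rfl
  · have hmul := weight_mul_of_lt (h := h) hi
    have hi' : (i : ℝ) + 1 ≤ N := by exact_mod_cast hi
    have := weightSum_nonneg hh0.le (N := N) i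
    nlinarith
  · have hmul := weight_self_mul (h := h) (N := i)
    have hsum : weight h i i + weightSum h i i = 2 * i * h + 1 := by
      rw [add_comm, ← weightSum_succ, weightSum_succ_self]
    have : (0 : ℝ) ≤ i := by positivity
    nlinarith

variable {E : Type*} [NormedAddCommGroup E] [InnerProductSpace ℝ E]

variable (h N)

/-- `δ (n - 1)` and `g (n - 1)` are junk at `n = 0`, where they are multiplied by
`weightSum h N 0 = 0`. -/
noncomputable def potential (δ : ℕ → ℝ) (g : ℕ → E) (u₀ : E) (n : ℕ) : ℝ :=
  ‖u₀ - ∑ j ∈ range n, weight h N j • g j‖ ^ 2 / 2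
    + (2 * N * h + 1 - weightSum h N n) * (∑ j ∈ range n, (weight h N j - h) * ‖g j‖ ^ 2) / 2
    + weightSum h N n * (δ (n - 1) - h * ‖g (n - 1)‖ ^ 2 / 2)

variable {h N}

@[simp] theorem potential_zero (δ : ℕ → ℝ) (g : ℕ → E) (u₀ : E) :
    potential h N δ g u₀ 0 = ‖u₀‖ ^ 2 / 2 := by
  simp [potential]

/-- The correction term vanishes for `n < N` and is `h (2Nh+1) ‖g N‖² / 2` for `n = N`. -/
theorem potential_succ_add_le (hh0 : 0 < h) (hh1 : h ≤ 1) {δ : ℕ → ℝ} {g : ℕ → E} {u₀ : E}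
    (hstep : ∀ i < N, δ (i + 1) ≤ δ i - h * ⟪g (i + 1), g i⟫ - ‖g (i + 1) - g i‖ ^ 2 / 2)
    (hopt : ∀ i ≤ N, δ i ≤ ⟪g i, u₀ - h • ∑ j ∈ range i, g j⟫ - ‖g i‖ ^ 2 / 2)
    {n : ℕ} (hn : n ≤ N) :
    potential h N δ g u₀ (n + 1)
        + h * (2 * N * h + 1 + weightSum h N n - weight h N n * (2 * N - n)) * ‖g n‖ ^ 2 / 2
      ≤ potential h N δ g u₀ n := by
  set t := weight h N n with ht_def
  set a := weightSum h N n with ha_def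
  set P := ∑ j ∈ range n, weight h N j • g j with hP_def
  set Q := ∑ j ∈ range n, g j with hQ_def
  set S := ∑ j ∈ range n, (weight h N j - h) * ‖g j‖ ^ 2 with hS_def
  set D := ∑ j ∈ range n, (weight h N j - h) * ‖g n - g j‖ ^ 2 with hD_def
  have hD : D = (a - n * h) * ‖g n‖ ^ 2 - 2 * (⟪g n, P⟫ - h * ⟪g n, Q⟫) + S := by
    rw [hD_def, sum_mul_norm_sub_sq]
    simp only [sum_sub_distrib, sub_smul, sum_range_weight, sum_const, card_range, nsmul_eq_mul,
      ← smul_sum, inner_sub_right, real_inner_smul_right]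
    ring
  have hD_nonneg : 0 ≤ D := sum_nonneg fun j hj => mul_nonneg
    (sub_nonneg.2 (le_weight hh0 hh1 ((mem_range.1 hj).le.trans hn))) (sq_nonneg _)
  have ha : 0 ≤ a := weightSum_nonneg hh0.le n
  have ht : h ≤ t := le_weight hh0 hh1 hn
  have hE : a * (δ n - (δ (n - 1) - h * ⟪g n, g (n - 1)⟫ - ‖g n - g (n - 1)‖ ^ 2 / 2)) ≤ 0 := by
    rcases n with _ | i
    · simp [a]
    · rw [Nat.add_sub_cancel]
      exact mul_nonpos_of_nonneg_of_nonpos ha (by linarith [hstep i hn])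
  have hF : t * (δ n - (⟪g n, u₀ - h • Q⟫ - ‖g n‖ ^ 2 / 2)) ≤ 0 :=
    mul_nonpos_of_nonneg_of_nonpos (hh0.le.trans ht) (by linarith [hopt n hn])
  have hres : 0 ≤ t * D + a * (1 - h) * ‖g n - g (n - 1)‖ ^ 2 := by
    have := mul_nonneg (mul_nonneg ha (sub_nonneg.2 hh1)) (sq_nonneg ‖g n - g (n - 1)‖)
    nlinarith [mul_nonneg (hh0.le.trans ht) hD_nonneg]
  have key : potential h N δ g u₀ (n + 1)
        + h * (2 * N * h + 1 + a - t * (2 * N - n)) * ‖g n‖ ^ 2 / 2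
      = potential h N δ g u₀ n
        + a * (δ n - (δ (n - 1) - h * ⟪g n, g (n - 1)⟫ - ‖g n - g (n - 1)‖ ^ 2 / 2))
        + t * (δ n - (⟪g n, u₀ - h • Q⟫ - ‖g n‖ ^ 2 / 2))
        - (t * D + a * (1 - h) * ‖g n - g (n - 1)‖ ^ 2) / 2 := by
    simp only [potential, sum_range_succ, weightSum_succ, Nat.add_sub_cancel, ← ht_def, ← ha_def,
      ← hP_def, ← hS_def]
    rw [hD, sub_add_eq_sub_sub, norm_sub_sq_real (u₀ - P), norm_sub_sq_real (g n),
      inner_sub_right, inner_sub_left, real_inner_smul_right, real_inner_smul_right,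
      real_inner_smul_right, norm_smul, Real.norm_eq_abs, mul_pow, sq_abs, real_inner_comm (g n) u₀,
      real_inner_comm (g n) P]
    ring
  linarith

theorem potential_le (hh0 : 0 < h) (hh1 : h ≤ 1) {δ : ℕ → ℝ} {g : ℕ → E} {u₀ : E}
    (hstep : ∀ i < N, δ (i + 1) ≤ δ i - h * ⟪g (i + 1), g i⟫ - ‖g (i + 1) - g i‖ ^ 2 / 2)
    (hopt : ∀ i ≤ N, δ i ≤ ⟪g i, u₀ - h • ∑ j ∈ range i, g j⟫ - ‖g i‖ ^ 2 / 2) :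
    ∀ n ≤ N, potential h N δ g u₀ n ≤ ‖u₀‖ ^ 2 / 2
  | 0, _ => (potential_zero δ g u₀).le
  | n + 1, hn => by
    have hdecr := potential_succ_add_le hh0 hh1 hstep hopt (Nat.le_of_succ_le hn)
    rw [← weight_mul_of_lt hn, sub_self, mul_zero, zero_mul, zero_div, add_zero] at hdecr
    exact hdecr.trans (potential_le hh0 hh1 hstep hopt n (Nat.le_of_succ_le hn))

theorem mul_le_of_interpolation (hh0 : 0 < h) (hh1 : h ≤ 1) {δ : ℕ → ℝ} {g : ℕ → E} {u₀ : E}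
    (hstep : ∀ i < N, δ (i + 1) ≤ δ i - h * ⟪g (i + 1), g i⟫ - ‖g (i + 1) - g i‖ ^ 2 / 2)
    (hopt : ∀ i ≤ N, δ i ≤ ⟪g i, u₀ - h • ∑ j ∈ range i, g j⟫ - ‖g i‖ ^ 2 / 2) :
    (2 * N * h + 1) * δ N ≤ ‖u₀‖ ^ 2 / 2 := by
  have hlast := potential_succ_add_le hh0 hh1 hstep hopt le_rfl
  have hfirst := potential_le hh0 hh1 hstep hopt N le_rfl
  have hpot : potential h N δ g u₀ (N + 1) = ‖u₀ - ∑ j ∈ range (N + 1), weight h N j • g j‖ ^ 2 / 2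
      + (2 * N * h + 1) * (δ N - h * ‖g N‖ ^ 2 / 2) := by
    simp [potential, weightSum_succ_self]
  rw [hpot, show (2 * N - N : ℝ) = N by ring, weight_self_mul] at hlast
  nlinarith [sq_nonneg ‖u₀ - ∑ j ∈ range (N + 1), weight h N j • g j‖]

theorem mul_sub_le_of_lipschitz_one [CompleteSpace E] {f : E → ℝ} (hh0 : 0 < h) (hh1 : h ≤ 1)
    (hconv : ConvexOn ℝ Set.univ f) (hf : Differentiable ℝ f)
    (hlip : ∀ x y, ‖gradient f x - gradient f y‖ ≤ ‖x - y‖)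
    {xstar : E} (hmin : ∀ y, f xstar ≤ f y) {x : ℕ → E}
    (hrec : ∀ i < N, x (i + 1) = x i - h • gradient f (x i)) :
    (2 * N * h + 1) * (f (x N) - f xstar) ≤ ‖x 0 - xstar‖ ^ 2 / 2 := by
  have hgrad_min : gradient f xstar = 0 := by
    have hloc : IsLocalMin f xstar := Filter.Eventually.of_forall hmin
    rw [gradient, hloc.fderiv_eq_zero, map_zero]
  have hlip1 : ∀ x y, ‖gradient f x - gradient f y‖ ≤ 1 * ‖x - y‖ := by simpa using hlip
  have hiter := eq_sub_smul_sum_range_of_succ hrec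
  refine mul_le_of_interpolation (δ := fun i => f (x i) - f xstar)
    (g := fun i => gradient f (x i)) (u₀ := x 0 - xstar) hh0 hh1 (fun i hi => ?_) (fun i hi => ?_)
  · have := hconv.add_inner_gradient_add_sq_le one_pos hf hlip1 (x (i + 1)) (x i)
    rw [hrec i hi, sub_sub_cancel, real_inner_smul_right, ← hrec i hi, norm_sub_rev] at this
    linarith
  · have := hconv.add_inner_gradient_add_sq_le one_pos hf hlip1 (x i) xstar
    have hu : x 0 - xstar - h • ∑ j ∈ range i, gradient f (x j) = x i - xstar := by
      rw [hiter i hi, sub_right_comm]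
    rw [hgrad_min, zero_sub, norm_neg, ← neg_sub, inner_neg_right] at this
    rw [hu]
    linarith

end GradientMethod

theorem gradient_method_bound
    {d : ℕ} (f : EuclideanSpace ℝ (Fin d) → ℝ) (L h : ℝ) (N : ℕ)
    (hL : 0 < L) (hh0 : 0 < h) (hh1 : h ≤ 1)
    (hconv : ConvexOn ℝ Set.univ f)
    (hdiff : Differentiable ℝ f)
    (hlip : ∀ x y, ‖gradient f x - gradient f y‖ ≤ L * ‖x - y‖)
    (xstar : EuclideanSpace ℝ (Fin d)) (hmin : ∀ y, f xstar ≤ f y)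
    (x : ℕ → EuclideanSpace ℝ (Fin d))
    (hrec : ∀ i, i < N → x (i + 1) = x i - (h / L) • gradient f (x i)) :
    f (x N) - f xstar ≤ L * ‖x 0 - xstar‖ ^ 2 / (4 * N * h + 2) := by
  have hL' : 0 ≤ L⁻¹ := inv_nonneg.2 hL.le
  have hgrad : ∀ y, gradient (fun y => L⁻¹ * f y) y = L⁻¹ • gradient f y :=
    gradient_const_mul L⁻¹ hdiff
  have hlip' : ∀ y z, ‖gradient (fun y => L⁻¹ * f y) y - gradient (fun y => L⁻¹ * f y) z‖
      ≤ ‖y - z‖ := fun y z => by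
    rw [hgrad, hgrad, ← smul_sub, norm_smul, Real.norm_of_nonneg hL', inv_mul_le_iff₀ hL]
    exact hlip y z
  have hbound := GradientMethod.mul_sub_le_of_lipschitz_one (f := fun y => L⁻¹ * f y) (x := x)
    (N := N) hh0 hh1 (hconv.smul hL') (hdiff.const_mul L⁻¹) hlip'
    (fun y => mul_le_mul_of_nonneg_left (hmin y) hL')
    (fun i hi => by rw [hgrad, smul_smul, ← div_eq_mul_inv]; exact hrec i hi)
  rw [le_div_iff₀ (by positivity)]
  rw [← mul_sub, ← mul_assoc, mul_comm _ L⁻¹, mul_assoc, inv_mul_le_iff₀ hL] at hbound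
  linarith
end

section
/- Let t₁ = 1 and t_{i+1} = (1 + √(1+4t_i²))/2. Define step coefficients h_k^{(i+1)} recursively by h_i^{(i+1)} = 1 + (t_i−1)/t_{i+1}, h_{i−1}^{(i+1)} = ((t_i−1)/t_{i+1})(h_{i−1}^{(i)} − 1), and h_k^{(i+1)} = ((t_i−1)/t_{i+1}) h_k^{(i)} for k+2 ≤ i. Then the sequence y₁ = x₀, y_{i+1} = y_i − (1/L)Σ_{k=1}^{i} h_k^{(i+1)} ∇f(y_k) (i = 1,…,N−1), x_N = y_N − (1/L)∇f(y_N) coincides with the sequences generated by Nesterov's fast gradient method: x_i = y_i − (1/L)∇f(y_i), y_{i+1} = x_i + ((t_i−1)/t_{i+1})(x_i − x_{i−1}). -/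
/-- The FGM sequence t₁ = 1, t_{i+1} = (1 + √(1+4t_i²))/2, indexed so that
`fgmT i` is t_i for i ≥ 1. -/
noncomputable def fgmT : ℕ → ℝ
  | 0 => 1
  | n + 1 => if n = 0 then 1 else (1 + Real.sqrt (1 + 4 * (fgmT n) ^ 2)) / 2

/-- The step coefficients h_k^{(i)} of the serial form of FGM: `fgmH i k` is
h_k^{(i)}, defined by h_i^{(i+1)} = 1 + (t_i−1)/t_{i+1},
h_{i−1}^{(i+1)} = ((t_i−1)/t_{i+1})(h_{i−1}^{(i)} − 1), and
h_k^{(i+1)} = ((t_i−1)/t_{i+1}) h_k^{(i)} for k + 2 ≤ i. -/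
noncomputable def fgmH : ℕ → ℕ → ℝ
  | 0, _ => 0
  | 1, _ => 0
  | (i + 2), k =>
    if k = i + 1 then 1 + (fgmT (i + 1) - 1) / fgmT (i + 2)
    else if k = i then (fgmT (i + 1) - 1) / fgmT (i + 2) * (fgmH (i + 1) k - 1)
    else (fgmT (i + 1) - 1) / fgmT (i + 2) * fgmH (i + 1) k


private lemma fgmH_eq (i k : ℕ) : fgmH (i + 2) k =
    if k = i + 1 then 1 + (fgmT (i + 1) - 1) / fgmT (i + 2)
    else if k = i then (fgmT (i + 1) - 1) / fgmT (i + 2) * (fgmH (i + 1) k - 1)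
    else (fgmT (i + 1) - 1) / fgmT (i + 2) * fgmH (i + 1) k := rfl

theorem fgm_serial_form
    {d : ℕ} (f : EuclideanSpace ℝ (Fin d) → ℝ) (L : ℝ) (hL : 0 < L) (N : ℕ) (hN : 1 ≤ N)
    (x y : ℕ → EuclideanSpace ℝ (Fin d))
    (hy1 : y 1 = x 0)
    (hx : ∀ i, 1 ≤ i → x i = y i - (1 / L) • gradient f (y i))
    (hy : ∀ i, 1 ≤ i →
      y (i + 1) = x i + ((fgmT i - 1) / fgmT (i + 1)) • (x i - x (i - 1)))
    (y' : ℕ → EuclideanSpace ℝ (Fin d))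
    (hy'1 : y' 1 = x 0)
    (hy' : ∀ i, 1 ≤ i → i ≤ N - 1 →
      y' (i + 1) = y' i -
        (1 / L) • ∑ k ∈ Finset.Icc 1 i, fgmH (i + 1) k • gradient f (y' k)) :
    (∀ i, 1 ≤ i → i ≤ N → y' i = y i) ∧
    y' N - (1 / L) • gradient f (y' N) = x N := by

  have key : ∀ i, 1 ≤ i →
      y (i + 1) = y i - (1 / L) •
        ∑ k ∈ Finset.Icc 1 i, fgmH (i + 1) k • gradient f (y k) := by
    intro i hi
    induction i with
    | zero => omega
    | succ m ih =>
      rcases Nat.lt_or_ge m 1 with hm | hm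
      · -- base case i = 1
        have hm0 : m = 0 := by omega
        subst hm0
        have hx1 := hx 1 le_rfl
        have hyr := hy 1 le_rfl
        simp only [Nat.sub_self] at hyr
        rw [hx1, ← hy1] at hyr
        rw [hyr, Finset.Icc_self, Finset.sum_singleton]
        have h1 : fgmH 2 1 = 1 + (fgmT 1 - 1) / fgmT 2 := by
          rw [show (2 : ℕ) = 0 + 2 from rfl, fgmH_eq, if_pos rfl]
        rw [h1]
        module
      · obtain ⟨n, rfl⟩ : ∃ n, m = n + 1 := ⟨m - 1, by omega⟩
        have IH := ih (by omega)
        have hyr := hy (n + 2) (by omega)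
        have hx2 := hx (n + 2) (by omega)
        have hx1 := hx (n + 1) (by omega)
        have hsub : n + 2 - 1 = n + 1 := by omega
        rw [hsub, hx2, hx1] at hyr
        have hcongr : ∑ k ∈ Finset.Icc 1 n, fgmH (n + 3) k • gradient f (y k)
            = ∑ k ∈ Finset.Icc 1 n,
              ((fgmT (n + 2) - 1) / fgmT (n + 3)) • (fgmH (n + 2) k • gradient f (y k)) := by
          refine Finset.sum_congr rfl fun k hk => ?_
          have hk' : k ≤ n := (Finset.mem_Icc.mp hk).2
          rw [smul_smul]
          congr 1
          rw [show n + 3 = (n + 1) + 2 from rfl, fgmH_eq,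
            if_neg (by omega), if_neg (by omega)]
        have h1 : fgmH (n + 3) (n + 2) = 1 + (fgmT (n + 2) - 1) / fgmT (n + 3) := by
          rw [show n + 3 = (n + 1) + 2 from rfl, fgmH_eq, if_pos rfl]
        have h2 : fgmH (n + 3) (n + 1)
            = (fgmT (n + 2) - 1) / fgmT (n + 3) * (fgmH (n + 2) (n + 1) - 1) := by
          rw [show n + 3 = (n + 1) + 2 from rfl, fgmH_eq,
            if_neg (by omega), if_pos rfl]
        rw [Finset.sum_Icc_succ_top (by omega : 1 ≤ n + 2),
          Finset.sum_Icc_succ_top (by omega : 1 ≤ n + 1), hcongr, ← Finset.smul_sum,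
          h1, h2]
        rw [Finset.sum_Icc_succ_top (by omega : 1 ≤ n + 1)] at IH
        rw [hyr, IH]
        module
  have heq : ∀ i, 1 ≤ i → i ≤ N → y' i = y i := by
    intro i
    induction i using Nat.strong_induction_on with
    | _ i ih =>
      intro h1 h2
      match i, h1 with
      | 1, _ => rw [hy'1, hy1]
      | (m + 2), _ =>
        rw [hy' (m + 1) (by omega) (by omega), key (m + 1) (by omega),
          ih (m + 1) (by omega) (by omega) (by omega)]
        congr 2
        refine Finset.sum_congr rfl fun k hk => ?_
        have hk1 := Finset.mem_Icc.mp hk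
        rw [ih k (by omega) (by omega) (by omega)]
  refine ⟨heq, ?_⟩
  rw [heq N hN le_rfl]
  exact (hx N hN).symm
end

section
/- For N ≥ 1 let λ_i = i/(2N+1−i), t = 1/(2Nh+1) with 0 < h ≤ 1, q = (λ₁, λ₂−λ₁, …, λ_N−λ_{N−1}, 1−λ_N)ᵀ ∈ ℝ^{N+1}, and S = [[(1−h)S₀ + hS₁, q],[qᵀ, t]] with S₀, S₁ the matrices defined in the two earlier statements. Then the vector u = (1,1,…,1,−(2Nh+1))ᵀ ∈ ℝ^{N+2} satisfies S u = 0. -/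
/-! Each row of `S₀` sums to the corresponding entry of `q`, and each row of `S₁` sums to
`(2N+1) q_i`; for `S₁` this comes down to the identity `(2N+1-i) λ_i = i`. Hence
`((1-h) S₀ + h S₁) 𝟙 = (2Nh+1) q`, while the entries of `q` telescope to `1 = t (2Nh+1)`:
these are the two block rows of `S u = 0`. -/

open Matrix

/-- q = (λ₁, λ₂−λ₁, …, λ_N−λ_{N−1}, 1−λ_N). -/
noncomputable def qvec (N : ℕ) : Fin (N + 1) → ℝ := fun i =>
  if (i : ℕ) = N then 1 - lamS N N else lamS N (i + 1) - lamS N i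

open Finset

theorem Finset.sum_range_sub_comp_max {G : Type*} [AddCommGroup G] (f : ℕ → G) {i n : ℕ}
    (hi : i ≤ n) :
    ∑ k ∈ range n, (f (max i k + 1) - f (max i k)) = i • (f (i + 1) - f i) + (f n - f i) := by
  induction n, hi using Nat.le_induction with
  | base =>
    rw [sum_congr rfl fun k hk => by rw [max_eq_left (mem_range.mp hk).le], sum_const, card_range,
      sub_self, add_zero]
  | succ n hin ih =>
    rw [sum_range_succ, ih, max_eq_right hin]
    abel

theorem Finset.sum_range_ite_succ_eq {M : Type*} [AddCommMonoid M] (f : ℕ → M) (hf : f 0 = 0)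
    {i n : ℕ} (hi : i ≤ n + 1) :
    ∑ k ∈ range (n + 1), (if k + 1 = i then f (k + 1) else 0) = f i := by
  have h := sum_range_succ' (fun k => if k = i then f k else 0) (n + 1)
  simp only [hf, ite_self, add_zero, sum_ite_eq', mem_range] at h
  rw [← h, if_pos (by omega)]

theorem Matrix.fromBlocks_mulVec_sumElim_eq_zero {m R : Type*} [Fintype m] [CommRing R]
    (A : Matrix m m R) (q : m → R) (c t : R) (hA : A *ᵥ 1 = c • q) (hq : ∑ i, q i = c * t) :
    fromBlocks A (of fun i (_ : Fin 1) => q i) (of fun (_ : Fin 1) j => q j)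
        (of fun (_ : Fin 1) (_ : Fin 1) => t) *ᵥ Sum.elim (fun _ => 1) (fun _ => -c) = 0 := by
  rw [fromBlocks_mulVec]
  ext (i | i)
  · have hAi : ∑ j, A i j = c * q i := by simpa [mulVec, dotProduct] using congrFun hA i
    simp [mulVec, dotProduct, hAi, mul_comm]
  · simp [mulVec, dotProduct, hq, mul_comm]

section
variable (N : ℕ)

theorem lamS_zero : lamS N 0 = 0 := by simp [lamS]

theorem sub_mul_lamS {i : ℕ} (hi : i ≤ N) : (2 * N + 1 - i : ℝ) * lamS N i = i := by
  have : (i : ℝ) ≤ N := by exact_mod_cast hi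
  exact mul_div_cancel₀ _ (by linarith)

theorem sum_qvec : ∑ j, qvec N j = 1 := by
  rw [Fin.sum_univ_castSucc]
  simp only [qvec, Fin.val_castSucc, Fin.val_last, fun j : Fin N => j.isLt.ne, if_true, if_false]
  rw [Fin.sum_univ_eq_sum_range (fun k => lamS N (k + 1) - lamS N k), sum_range_sub, lamS_zero]
  ring

theorem S0mat_mulVec_one : S0mat N *ᵥ 1 = qvec N := by
  ext i
  have hi : (i : ℕ) ≤ N := Nat.le_of_lt_succ i.isLt
  let e : ℕ → ℝ := fun k =>
    (if (i : ℕ) = k then (if (i : ℕ) = N then 1 else 2 * lamS N (i + 1)) else 0)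
      + (if (i : ℕ) + 1 = k then -lamS N (i + 1) else 0)
      + (if k + 1 = i then -lamS N (k + 1) else 0)
  have entry : ∀ j : Fin (N + 1), S0mat N i j = e j := fun j => by
    simp only [S0mat, of_apply, Fin.ext_iff, e]
    split_ifs <;> first | rfl | omega | simp
  simp only [mulVec, dotProduct, Pi.one_apply, mul_one, entry]
  rw [Fin.sum_univ_eq_sum_range e]
  simp only [e, sum_add_distrib, sum_ite_eq, mem_range, if_pos i.isLt,
    sum_range_ite_succ_eq (fun k => -lamS N k) (by simp [lamS_zero]) (Nat.le_succ_of_le hi), qvec]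
  rcases hi.lt_or_eq with hlt | hiN
  · simp only [hlt.ne, if_false, if_pos (Nat.succ_lt_succ hlt)]
    ring
  · simp only [hiN, if_true, lt_irrefl, if_false]
    ring

theorem S1mat_mulVec_one : S1mat N *ᵥ 1 = (2 * N + 1 : ℝ) • qvec N := by
  ext i
  simp only [mulVec, dotProduct, Pi.one_apply, mul_one, Pi.smul_apply, smul_eq_mul]
  induction i using Fin.lastCases with
  | last =>
    have hlam := sub_mul_lamS N le_rfl
    simp only [Fin.sum_univ_castSucc, S1mat, qvec, of_apply, Fin.val_last, Fin.val_castSucc,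
      fun j : Fin N => j.isLt.ne, and_self, and_false, true_or, if_true, if_false, sum_const,
      card_univ, Fintype.card_fin, nsmul_eq_mul]
    linear_combination hlam
  | cast i =>
    have hi : (i : ℕ) < N := i.isLt
    have hlam := sub_mul_lamS N hi.le
    have hlam' := sub_mul_lamS N (i := i + 1) hi
    simp only [Fin.sum_univ_castSucc, S1mat, qvec, of_apply, Fin.val_last, Fin.val_castSucc,
      fun j : Fin N => j.isLt.ne, false_and, or_true, or_false, if_true, if_false, Fin.ext_iff]
    set g : ℕ → ℝ := fun m => lamS N (m + 1) - lamS N m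
    have diag : ∀ k : ℕ, (if (i : ℕ) = k then 2 * lamS N (i + 1) else g (max i k)) =
        g (max i k) + if (i : ℕ) = k then lamS N (i + 1) + lamS N i else 0 := fun k => by
      split_ifs with hk
      · simp only [g, ← hk, max_self]
        ring
      · ring
    rw [Fin.sum_univ_eq_sum_range (fun k => if (i : ℕ) = k then 2 * lamS N (i + 1) else g (max i k)),
      sum_congr rfl fun k _ => diag k, sum_add_distrib, sum_range_sub_comp_max _ hi.le, sum_ite_eq,
      if_pos (mem_range.mpr hi), nsmul_eq_mul]
    push_cast at hlam'
    linear_combination hlam - hlam'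

end

theorem S_kernel_vector_general (N : ℕ) (h : ℝ) (hh0 : 0 < h) :
    (Matrix.fromBlocks ((1 - h) • S0mat N + h • S1mat N)
        (Matrix.of fun i (_ : Fin 1) => qvec N i)
        (Matrix.of fun (_ : Fin 1) j => qvec N j)
        (Matrix.of fun (_ : Fin 1) (_ : Fin 1) => 1 / (2 * N * h + 1))).mulVec
      (Sum.elim (fun _ => 1) fun _ => -(2 * N * h + 1)) = 0 := by
  apply fromBlocks_mulVec_sumElim_eq_zero
  · rw [add_mulVec, smul_mulVec, smul_mulVec, S0mat_mulVec_one, S1mat_mulVec_one]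
    module
  · rw [sum_qvec, mul_one_div_cancel (by positivity)]

theorem S_kernel_vector (N : ℕ) (hN : 1 ≤ N) (h : ℝ) (hh0 : 0 < h) (hh1 : h ≤ 1) :
    (Matrix.fromBlocks ((1 - h) • S0mat N + h • S1mat N)
        (Matrix.of fun i (_ : Fin 1) => qvec N i)
        (Matrix.of fun (_ : Fin 1) j => qvec N j)
        (Matrix.of fun (_ : Fin 1) (_ : Fin 1) => 1 / (2 * N * h + 1))).mulVec
      (Sum.elim (fun _ => 1) fun _ => -(2 * N * h + 1)) = 0 :=
  S_kernel_vector_general N h hh0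
end
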